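/- Let R be a ring satisfying (SR_r), let q be a two-sided ideal of R, and let n ≥ r. Let v, v' ∈ R^n be unimodular vectors reducing to the same vector in (R/q)^n. Then there exists M ∈ EL_n(R, q) with M·v = v'. -/

import Mathlib

open Matrix

/-- A vector `v ∈ Rⁿ` is *unimodular* if some homomorphism of right `R`-modules
`φ : Rⁿ → R` sends it to `1`.  Right `R`-modules are encoded as modules over `Rᵐᵒᵖ`. -/
def IsUnimodular {n : ℕ} (R : Type) [Ring R] (v : Fin n → R) : Prop :=
  ∃ φ : (Fin n → R) →ₗ[Rᵐᵒᵖ] R, φ v = 1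

/-- Bass's stable rank condition `(SR_r)`: for all `n ≥ r` and every unimodular
`(c₁, …, cₙ) ∈ Rⁿ` there are `b₁, …, b_{n-1} ∈ R` such that
`(c₁ + b₁ cₙ, …, c_{n-1} + b_{n-1} cₙ)` is unimodular. -/
def SatisfiesSR (R : Type) [Ring R] (r : ℕ) : Prop :=
  ∀ n : ℕ, r ≤ n + 1 → ∀ c : Fin (n + 1) → R, IsUnimodular R c →
    ∃ b : Fin n → R,
      IsUnimodular R (fun i : Fin n => c i.castSucc + b i * c (Fin.last n))

/-- An elementary matrix differs from the identity at exactly one off-diagonal entry. -/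
def IsElementaryMatrix {R : Type} [Ring R] {n : ℕ} (A : Matrix (Fin n) (Fin n) R) : Prop :=
  ∃ i j : Fin n, i ≠ j ∧ ∃ x : R, A = 1 + Matrix.single i j x

/-- `EL_n(R)`: the subgroup of `GL_n(R)` generated by the elementary matrices. -/
def ElementarySubgroup (R : Type) [Ring R] (n : ℕ) : Subgroup ((Matrix (Fin n) (Fin n) R)ˣ) :=
  Subgroup.closure {M : (Matrix (Fin n) (Fin n) R)ˣ | IsElementaryMatrix M.val}

/-- An elementary matrix whose single off-diagonal entry lies in the two-sided ideal `q`. -/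
def IsQElementaryMatrix {R : Type} [Ring R] (q : TwoSidedIdeal R) {n : ℕ}
    (A : Matrix (Fin n) (Fin n) R) : Prop :=
  ∃ i j : Fin n, i ≠ j ∧ ∃ x : R, x ∈ q ∧ A = 1 + Matrix.single i j x

/-- `EL_n(R, q)`: the subgroup of `EL_n(R)` normally generated (in `EL_n(R)`) by the
elementary matrices whose off-diagonal entry lies in `q`; equivalently, the subgroup
generated by all `EL_n(R)`-conjugates of such elementary matrices. -/
def CongruenceElementarySubgroup (R : Type) [Ring R] (n : ℕ) (q : TwoSidedIdeal R) :
    Subgroup (Matrix (Fin n) (Fin n) R)ˣ :=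
  Subgroup.closure {g : (Matrix (Fin n) (Fin n) R)ˣ |
    ∃ e : (Matrix (Fin n) (Fin n) R)ˣ, IsQElementaryMatrix q e.val ∧
      ∃ h ∈ ElementarySubgroup R n, g = h * e * h⁻¹}


/-!
After one application of `(SR_r)`, realised as a column operation, the first `n - 1`
coordinates of a unimodular vector `x` have a left inverse `z`, and a few elementary
operations whose coefficients are built from `z` carry `x` to `e₀`. If `x ≡ e₀ (mod q)`,
every coefficient lies in `q` except for the column operation and one row operation; those
two are applied by conjugation, which preserves `EL_n(R, q)` because it is normalised by
`EL_n(R)`. For the theorem, take `h ∈ EL_n(R)` with `h v' = e₀` (the case `q = R`); then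
`h v ≡ e₀ (mod q)` is unimodular, so `h v` reaches `e₀ = h v'` inside `EL_n(R, q)`.
-/

section
variable {R : Type} [Ring R] {n : ℕ} {q : TwoSidedIdeal R}

theorem isUnimodular_iff_exists_dotProduct_eq_one (v : Fin n → R) :
    IsUnimodular R v ↔ ∃ z : Fin n → R, z ⬝ᵥ v = 1 := by
  constructor
  · rintro ⟨φ, hφ⟩
    refine ⟨fun i => φ (Pi.single i 1), ?_⟩
    calc _ = ∑ i, φ (MulOpposite.op (v i) • Pi.single i 1) := by simp [dotProduct]
      _ = φ v := by
        rw [← map_sum]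
        congr
        ext j
        simp [Pi.single_apply]
      _ = 1 := hφ
  · rintro ⟨z, hz⟩
    exact ⟨{ toFun := (z ⬝ᵥ ·)
             map_add' := dotProduct_add z
             map_smul' := fun c x => dotProduct_smul c z x }, hz⟩

theorem IsUnimodular.mulVec {v : Fin n → R} (hv : IsUnimodular R v)
    (M : (Matrix (Fin n) (Fin n) R)ˣ) : IsUnimodular R (M.val *ᵥ v) := by
  obtain ⟨z, hz⟩ := (isUnimodular_iff_exists_dotProduct_eq_one v).1 hv
  refine (isUnimodular_iff_exists_dotProduct_eq_one _).2 ⟨z ᵥ* M⁻¹.val, ?_⟩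
  rw [dotProduct_mulVec, vecMul_vecMul, Units.inv_mul, vecMul_one, hz]

theorem SatisfiesSR.subsingleton {r : ℕ} (hSR : SatisfiesSR R r) (hr : r ≤ 1) :
    Subsingleton R := by
  obtain ⟨_, ψ, hψ⟩ := hSR 0 hr (fun _ => 1) ⟨LinearMap.proj 0, rfl⟩
  rw [Subsingleton.elim (fun _ => _) (0 : Fin 0 → R), map_zero] at hψ
  exact subsingleton_of_zero_eq_one hψ

theorem congruenceElementarySubgroup_le_elementarySubgroup :
    CongruenceElementarySubgroup R n q ≤ ElementarySubgroup R n :=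
  (Subgroup.closure_le _).2 <| by
    rintro _ ⟨e, ⟨i, j, hij, x, -, he⟩, h, hh, rfl⟩
    exact mul_mem (mul_mem hh (Subgroup.subset_closure ⟨i, j, hij, x, he⟩)) (inv_mem hh)

theorem conj_mem_congruenceElementarySubgroup {h M : (Matrix (Fin n) (Fin n) R)ˣ}
    (hh : h ∈ ElementarySubgroup R n) (hM : M ∈ CongruenceElementarySubgroup R n q) :
    h * M * h⁻¹ ∈ CongruenceElementarySubgroup R n q := by
  have : (CongruenceElementarySubgroup R n q).map (MulAut.conj h).toMonoidHom ≤
      CongruenceElementarySubgroup R n q := by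
    rw [CongruenceElementarySubgroup, MonoidHom.map_closure, Subgroup.closure_le]
    rintro _ ⟨_, ⟨e, he, k, hk, rfl⟩, rfl⟩
    exact Subgroup.subset_closure ⟨e, he, h * k, mul_mem hh hk, by simp [mul_assoc]⟩
  exact this ⟨M, hM, rfl⟩

/-- By `hC`, `single a k (C a k) * single k j (C k j) = 0`, so `1 + C` is the product of the
elementary matrices `1 + single k j (C k j)`. -/
theorem exists_mem_congruenceElementarySubgroup_val_eq_one_add (C : Matrix (Fin n) (Fin n) R)
    (hq : ∀ k j, C k j ∈ q) (hC : ∀ a k j, C a k = 0 ∨ C k j = 0) :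
    ∃ M ∈ CongruenceElementarySubgroup R n q, M.val = 1 + C := by
  suffices ∀ P : Finset (Fin n × Fin n), ∃ M ∈ CongruenceElementarySubgroup R n q,
      M.val = 1 + ∑ p ∈ P, single p.1 p.2 (C p.1 p.2) by
    simpa [← Finset.univ_product_univ, Finset.sum_product, ← matrix_eq_sum_single]
      using this Finset.univ
  intro P
  induction P using Finset.induction_on with
  | empty => exact ⟨1, one_mem _, by simp⟩
  | insert p P hp ih =>
    obtain ⟨k, j⟩ := p
    obtain ⟨M, hM, hMC⟩ := ih
    rw [Finset.sum_insert hp]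
    by_cases hkj : k = j
    · subst hkj
      exact ⟨M, hM, by simp [hMC, (hC k k k).elim id id]⟩
    obtain ⟨E, hE⟩ := IsNilpotent.isUnit_one_add (R := Matrix (Fin n) (Fin n) R)
      ⟨2, by rw [sq, single_mul_single_of_ne (C k j) k j k (Ne.symm hkj)]⟩
    have hEq : E ∈ CongruenceElementarySubgroup R n q :=
      Subgroup.subset_closure ⟨E, ⟨k, j, hkj, _, hq k j, hE⟩, 1, one_mem _, by simp⟩
    have hzero : (∑ p ∈ P, single p.1 p.2 (C p.1 p.2)) * single k j (C k j) = 0 := by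
      rw [Finset.sum_mul]
      refine Finset.sum_eq_zero fun ⟨a, b⟩ _ => ?_
      by_cases hbk : b = k
      · subst hbk
        rw [single_mul_single_same]
        rcases hC a b j with h | h <;> simp [h]
      · exact single_mul_single_of_ne _ _ _ _ hbk _
    refine ⟨M * E, mul_mem hM hEq, ?_⟩
    rw [Units.val_mul, hMC, hE, mul_add, add_mul, add_mul, hzero, mul_one, one_mul, mul_one,
      add_zero]
    abel

theorem exists_mem_congruenceElementarySubgroup_val_eq_one_add_vecMulVec {u w : Fin n → R}
    (hu : ∀ k, u k ∈ q) (huw : ∀ k, u k = 0 ∨ w k = 0) :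
    ∃ M ∈ CongruenceElementarySubgroup R n q, M.val = 1 + vecMulVec u w :=
  exists_mem_congruenceElementarySubgroup_val_eq_one_add _
    (fun k j => q.mul_mem_right _ _ (hu k))
    fun a k j => (huw k).elim (fun h => .inr (by rw [vecMulVec_apply, h, zero_mul]))
      (fun h => .inl (by rw [vecMulVec_apply, h, mul_zero]))

def Reaches (G : Subgroup (Matrix (Fin n) (Fin n) R)ˣ) (a b : Fin n → R) : Prop :=
  ∃ M ∈ G, M.val *ᵥ a = b

theorem Reaches.trans {G : Subgroup (Matrix (Fin n) (Fin n) R)ˣ} {a b c : Fin n → R}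
    (hab : Reaches G a b) (hbc : Reaches G b c) : Reaches G a c := by
  obtain ⟨M, hM, rfl⟩ := hab
  obtain ⟨N, hN, rfl⟩ := hbc
  exact ⟨N * M, mul_mem hN hM, by rw [Units.val_mul, mulVec_mulVec]⟩

theorem Reaches.of_mulVec {h : (Matrix (Fin n) (Fin n) R)ˣ} (hh : h ∈ ElementarySubgroup R n)
    {a b : Fin n → R}
    (H : Reaches (CongruenceElementarySubgroup R n q) (h.val *ᵥ a) (h.val *ᵥ b)) :
    Reaches (CongruenceElementarySubgroup R n q) a b := by
  obtain ⟨M, hM, hMab⟩ := H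
  refine ⟨h⁻¹ * M * h⁻¹⁻¹, conj_mem_congruenceElementarySubgroup (inv_mem hh) hM, ?_⟩
  rw [inv_inv, Units.val_mul, Units.val_mul, ← mulVec_mulVec, ← mulVec_mulVec, hMab,
    mulVec_mulVec, Units.inv_mul, one_mulVec]

theorem reaches_add_of_dotProduct_eq_one {u w a : Fin n → R} (hu : ∀ k, u k ∈ q)
    (huw : ∀ k, u k = 0 ∨ w k = 0) (ha : w ⬝ᵥ a = 1) :
    Reaches (CongruenceElementarySubgroup R n q) a (a + u) := by
  obtain ⟨M, hM, hMv⟩ := exists_mem_congruenceElementarySubgroup_val_eq_one_add_vecMulVec hu huw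
  refine ⟨M, hM, ?_⟩
  rw [hMv, add_mulVec, one_mulVec, vecMulVec_mulVec, ha, MulOpposite.op_one, one_smul]

/-- Conjugation by `1 + vecMulVec u w ∈ EL_n(R)`, which fixes `b`. -/
theorem Reaches.of_add_smul {u w a b : Fin n → R} (huw : ∀ k, u k = 0 ∨ w k = 0)
    (hb : w ⬝ᵥ b = 0)
    (H : Reaches (CongruenceElementarySubgroup R n q) (a + MulOpposite.op (w ⬝ᵥ a) • u) b) :
    Reaches (CongruenceElementarySubgroup R n q) a b := by
  obtain ⟨h, hh, hval⟩ := exists_mem_congruenceElementarySubgroup_val_eq_one_add_vecMulVec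
    (q := ⊤) (fun _ => trivial) huw
  have hmul (c : Fin n → R) : h.val *ᵥ c = c + MulOpposite.op (w ⬝ᵥ c) • u := by
    rw [hval, add_mulVec, one_mulVec, vecMulVec_mulVec]
  refine Reaches.of_mulVec (congruenceElementarySubgroup_le_elementarySubgroup hh) ?_
  rwa [hmul, hmul, hb, MulOpposite.op_zero, zero_smul, add_zero]

/-- Moves: set the `p`-th coordinate to `1 - xᵢ` (coefficients `(1 - xᵢ - xₚ) z`), clear each
other coordinate `x_k` by subtracting `x_k` times `xᵢ + (1 - xᵢ) = 1`, and pass from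
`xᵢ eᵢ + (1 - xᵢ) eₚ` to `eᵢ`, applying the row operation `eᵢ += eₚ` by conjugation. -/
theorem reaches_single_of_dotProduct_eq_one {i p : Fin n} (hip : i ≠ p) {x z : Fin n → R}
    (hz : z ⬝ᵥ x = 1) (hzp : z p = 0) (hxi : x i - 1 ∈ q) (hxk : ∀ k ≠ i, x k ∈ q) :
    Reaches (CongruenceElementarySubgroup R n q) x (Pi.single i 1) := by
  have h1 : Reaches (CongruenceElementarySubgroup R n q) x (x + Pi.single p (1 - x i - x p)) := by
    refine reaches_add_of_dotProduct_eq_one (fun k => ?_) (fun k => ?_) hz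
    · by_cases hk : k = p
      · subst hk
        rw [Pi.single_eq_same, show 1 - x i - x k = -((x i - 1) + x k) by abel]
        exact q.neg_mem (q.add_mem hxi (hxk k hip.symm))
      · simp [hk, zero_mem]
    · by_cases hk : k = p <;> simp [hk, hzp]
  have h2 : Reaches (CongruenceElementarySubgroup R n q) (x + Pi.single p (1 - x i - x p))
      (Pi.single i (x i) + Pi.single p (1 - x i)) := by
    convert reaches_add_of_dotProduct_eq_one (u := fun k => if k = i ∨ k = p then 0 else -x k)
      (w := Pi.single i 1 + Pi.single p 1) (fun k => ?_) (fun k => ?_) ?_ using 1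
    · ext k
      by_cases hki : k = i <;> by_cases hkp : k = p <;> simp [hki, hkp, hip, Ne.symm hip]
    · split_ifs with hk
      · exact zero_mem _
      · exact q.neg_mem (hxk k (by tauto))
    · by_cases hki : k = i <;> by_cases hkp : k = p <;> simp [hki, hkp]
    · simp [add_dotProduct, Ne.symm hip]
  have h3 : Reaches (CongruenceElementarySubgroup R n q)
      (Pi.single i (x i) + Pi.single p (1 - x i)) (Pi.single i 1) := by
    refine Reaches.of_add_smul (u := Pi.single i 1) (w := Pi.single p 1) (fun k => ?_) ?_ ?_
    · by_cases hk : k = i <;> simp [hk, hip]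
    · simp [Ne.symm hip]
    · convert reaches_add_of_dotProduct_eq_one (u := Pi.single p (-(1 - x i)))
        (w := Pi.single i 1) (fun k => ?_) (fun k => ?_) ?_ using 1
      · ext k
        by_cases hki : k = i <;> by_cases hkp : k = p <;> simp [hki, hkp, hip, Ne.symm hip]
      · by_cases hk : k = p
        · simpa [hk] using hxi
        · simp [hk, zero_mem]
      · by_cases hk : k = p <;> simp [hk, hip]
      · simp [hip, Ne.symm hip]
  exact h1.trans (h2.trans h3)

/-- `(SR_r)` provides `b` such that `x + (Fin.snoc b 0) x_last` has a left inverse supported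
away from the last coordinate; that column operation is applied by conjugation. -/
theorem reaches_single_zero_of_isUnimodular {r m : ℕ} (hSR : SatisfiesSR R r) (hr : r ≤ m + 2)
    {x : Fin (m + 2) → R} (hx : IsUnimodular R x) (hx0 : x 0 - 1 ∈ q)
    (hxk : ∀ k ≠ 0, x k ∈ q) :
    Reaches (CongruenceElementarySubgroup R (m + 2) q) x (Pi.single 0 1) := by
  obtain ⟨b, hb⟩ := hSR (m + 1) hr x hx
  obtain ⟨z, hz⟩ := (isUnimodular_iff_exists_dotProduct_eq_one _).1 hb
  have hlast : Fin.last (m + 1) ≠ 0 := Fin.last_pos.ne'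
  have hxlast := hxk _ hlast
  refine Reaches.of_add_smul (u := Fin.snoc b 0) (w := Pi.single (Fin.last (m + 1)) 1)
    (fun k => ?_) (by simp) ?_
  · refine Fin.lastCases ?_ (fun k => ?_) k <;> simp
  refine reaches_single_of_dotProduct_eq_one hlast.symm (z := Fin.snoc z 0) ?_ (by simp) ?_ ?_
  · simpa [dotProduct, Fin.sum_univ_castSucc] using hz
  · convert q.add_mem hx0 (q.mul_mem_left (b 0) _ hxlast) using 1
    simp [add_sub_right_comm]
  · intro k hk
    simpa using q.add_mem (hxk k hk) (q.mul_mem_left _ _ hxlast)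

end

/-- If `R` satisfies `(SR_r)`, `n ≥ r`, and `v, v' ∈ Rⁿ` are unimodular vectors with the
same image in `(R/q)ⁿ`, then some `M ∈ EL_n(R, q)` satisfies `M·v = v'`. -/
theorem congruenceElementary_transitive_on_unimodular (R : Type) [Ring R] (r n : ℕ)
    (hSR : SatisfiesSR R r) (q : TwoSidedIdeal R) (hn : r ≤ n)
    (v v' : Fin n → R) (hv : IsUnimodular R v) (hv' : IsUnimodular R v')
    (hcong : ∀ i, v i - v' i ∈ q) :
    ∃ M ∈ CongruenceElementarySubgroup R n q, M.val.mulVec v = v' := by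
  rcases n with _ | _ | m
  · exact ⟨1, one_mem _, Subsingleton.elim _ _⟩
  · have := hSR.subsingleton hn
    exact ⟨1, one_mem _, Subsingleton.elim _ _⟩
  obtain ⟨h, hh, hv'0⟩ := reaches_single_zero_of_isUnimodular (q := ⊤) hSR hn hv' trivial
    fun _ _ => trivial
  have hmod (k : Fin (m + 2)) : (h.val *ᵥ v) k - (h.val *ᵥ v') k ∈ q := by
    rw [← Pi.sub_apply, ← mulVec_sub, mulVec, dotProduct]
    exact sum_mem fun l _ => q.mul_mem_left _ _ (hcong l)
  refine Reaches.of_mulVec (congruenceElementarySubgroup_le_elementarySubgroup hh) ?_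
  rw [hv'0]
  exact reaches_single_zero_of_isUnimodular hSR hn (hv.mulVec h) (by simpa [hv'0] using hmod 0)
    fun k hk => by simpa [hv'0, hk] using hmod k
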